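/- arXiv:2505.05938 — 3 statements merged into one kernel-verified Lean document; each statement's English description precedes it below -/
import Mathlib

section
/- For θ ∈ (0, π/2), among all pairs of holomorphic functions (F₁, F₂) on the unit disc 𝔹 with cos θ · F₁ + sin θ · z · F₂ = 1 and F₁, F₂ ∈ L²(𝔹), the minimum of ∫_𝔹 (|F₁|² + |F₂|²) dλ equals π/cos²θ, attained at (F₁, F₂) = (1/cos θ, 0). -/
/-!
Evaluating the constraint at `z = 0` gives `F₁ 0 = 1 / cos θ`. Integrating the circle mean value
property in polar coordinates shows that a holomorphic integrable function on a disc has area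
average equal to its value at the centre, so Jensen's inequality for `‖·‖²` yields
`∫ ‖F₁‖² ≥ π ‖F₁ 0‖² = π / cos² θ`, while the `F₂` term is nonnegative.
-/

open MeasureTheory Metric Set Real

theorem Complex.volume_real_ball (a : ℂ) {r : ℝ} (hr : 0 ≤ r) :
    volume.real (ball a r) = π * r ^ 2 := by
  simp [measureReal_def, Complex.volume_ball, ENNReal.toReal_ofReal hr, mul_comm]

theorem sq_norm_average_le_average_sq_norm {α E : Type*} [MeasurableSpace α] {μ : Measure α}
    [IsFiniteMeasure μ] [NormedAddCommGroup E] [NormedSpace ℝ E] [CompleteSpace E]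
    {f : α → E} (hf : MemLp f 2 μ) :
    ‖⨍ x, f x ∂μ‖ ^ 2 ≤ ⨍ x, ‖f x‖ ^ 2 ∂μ := by
  rcases eq_zero_or_neZero μ with rfl | _
  · simp
  exact (convexOn_univ_norm.pow (fun _ _ ↦ norm_nonneg _) 2).map_average_le
    (continuous_norm.pow 2).continuousOn isClosed_univ (ae_of_all _ fun _ ↦ mem_univ _)
    (hf.integrable one_le_two) (hf.integrable_norm_pow two_ne_zero)

section PolarCoordinates

variable {E : Type*} [NormedAddCommGroup E] [NormedSpace ℝ E] {f : ℂ → E} {c : ℂ} {r : ℝ}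

theorem setIntegral_ball_zero_eq_intervalIntegral_circleAverage
    (hr : 0 ≤ r) (hf : ContinuousOn f (closedBall 0 r)) :
    ∫ z in ball 0 r, f z = ∫ ρ in 0..r, (2 * π * ρ) • circleAverage f 0 ρ := by
  have hpolar : ∀ p : ℝ × ℝ, Complex.polarCoord.symm p = circleMap 0 p.1 p.2 := fun p ↦ by
    rw [Complex.polarCoord_symm_apply, circleMap, zero_add, Complex.exp_mul_I]; push_cast; ring
  set S := Ioo (0:ℝ) r ×ˢ Ioo (-π) π
  have hS : S ⊆ polarCoord.target := fun p hp ↦ ⟨hp.1.1, hp.2⟩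
  have hcont : ContinuousOn (fun p : ℝ × ℝ ↦ p.1 • f (circleMap 0 p.1 p.2))
      (Icc 0 r ×ˢ Icc (-π) π) := by
    refine continuousOn_fst.smul (hf.comp (by fun_prop) ?_)
    rintro ⟨ρ, θ⟩ ⟨hρ, -⟩
    simpa [abs_of_nonneg hρ.1] using hρ.2
  have hintegrable : IntegrableOn (fun p : ℝ × ℝ ↦ p.1 • f (circleMap 0 p.1 p.2)) S :=
    (hcont.integrableOn_compact (isCompact_Icc.prod isCompact_Icc)).mono_set
      (prod_mono Ioo_subset_Icc_self Ioo_subset_Icc_self)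
  have hcircle : ∀ ρ : ℝ, ∫ θ in Ioo (-π) π, f (circleMap 0 ρ θ)
      = (2 * π) • circleAverage f 0 ρ := by
    intro ρ
    rw [circleAverage, smul_inv_smul₀ (by positivity), ← integral_Ioc_eq_integral_Ioo,
      ← intervalIntegral.integral_of_le (by linarith [pi_pos])]
    have := ((periodic_circleMap 0 ρ).comp f).intervalIntegral_add_eq (-π) 0
    rwa [zero_add, show -π + 2 * π = π by ring] at this
  calc ∫ z in ball 0 r, f z
      = ∫ p in S, p.1 • f (circleMap 0 p.1 p.2) := by
        rw [← integral_indicator measurableSet_ball,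
          ← Complex.integral_comp_polarCoord_symm, ← inter_eq_self_of_subset_right hS,
          ← setIntegral_indicator (measurableSet_Ioo.prod measurableSet_Ioo)]
        refine setIntegral_congr_fun polarCoord.open_target.measurableSet ?_
        rintro ⟨ρ, θ⟩ ⟨hρ, hθ⟩
        replace hρ : 0 < ρ := hρ
        dsimp only
        have hmem : Complex.polarCoord.symm (ρ, θ) ∈ ball (0:ℂ) r ↔ (ρ, θ) ∈ S := by
          simp [S, abs_of_pos hρ, hρ, hθ]
        by_cases h : (ρ, θ) ∈ S
        · rw [indicator_of_mem (hmem.2 h), indicator_of_mem h, hpolar]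
        · rw [indicator_of_notMem (mt hmem.1 h), indicator_of_notMem h, smul_zero]
    _ = ∫ ρ in Ioo 0 r, ρ • ∫ θ in Ioo (-π) π, f (circleMap 0 ρ θ) := by
        rw [Measure.volume_eq_prod,
          setIntegral_prod _ (by rwa [← Measure.volume_eq_prod])]
        simp only [integral_smul]
    _ = ∫ ρ in 0..r, (2 * π * ρ) • circleAverage f 0 ρ := by
        simp only [hcircle, smul_smul, intervalIntegral.integral_of_le hr,
          integral_Ioc_eq_integral_Ioo, mul_comm]

theorem setIntegral_ball_eq_intervalIntegral_circleAverage
    (hr : 0 ≤ r) (hf : ContinuousOn f (closedBall c r)) :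
    ∫ z in ball c r, f z = ∫ ρ in 0..r, (2 * π * ρ) • circleAverage f c ρ := by
  have hshift : MapsTo (· + c) (closedBall 0 r) (closedBall c r) := fun z hz ↦ by
    rwa [mem_closedBall, dist_add_self_left, ← mem_closedBall_zero_iff]
  rw [← (measurePreserving_add_right volume c).setIntegral_preimage_emb
      (measurableEmbedding_addRight c), preimage_add_right_ball, sub_self,
    setIntegral_ball_zero_eq_intervalIntegral_circleAverage (f := fun z ↦ f (z + c)) hr
      (hf.comp (by fun_prop) hshift)]
  simp_rw [circleAverage_map_add_const]

end PolarCoordinates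

section MeanValue

variable {E : Type*} [NormedAddCommGroup E] [NormedSpace ℂ E] [CompleteSpace E]
  {f : ℂ → E} {c : ℂ}

theorem DiffContOnCl.setIntegral_ball {r : ℝ} (hf : DiffContOnCl ℂ f (ball c r)) (hr : 0 < r) :
    ∫ z in ball c r, f z = (π * r ^ 2) • f c := by
  have hmean : EqOn (fun ρ ↦ (2 * π * ρ) • Real.circleAverage f c ρ)
      (fun ρ ↦ (2 * π * ρ) • f c) (uIcc 0 r) := by
    intro ρ hρ
    rw [uIcc_of_le hr.le] at hρ
    have hρ' : ball c |ρ| ⊆ ball c r := ball_subset_ball ((abs_of_nonneg hρ.1).trans_le hρ.2)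
    simp only [(hf.mono hρ').circleAverage]
  rw [setIntegral_ball_eq_intervalIntegral_circleAverage hr.le
      (closure_ball c hr.ne' ▸ hf.continuousOn),
    intervalIntegral.integral_congr hmean, intervalIntegral.integral_smul_const,
    intervalIntegral.integral_const_mul, integral_id]
  congr 1
  ring

theorem DifferentiableOn.setIntegral_ball {R : ℝ} (hf : DifferentiableOn ℂ f (ball c R))
    (hfi : IntegrableOn f (ball c R)) (hR : 0 < R) :
    ∫ z in ball c R, f z = (π * R ^ 2) • f c := by
  obtain ⟨r, hr_mono, hr_mem, hr_lim⟩ := exists_seq_strictMono_tendsto' hR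
  have hunion : ⋃ n, ball c (r n) = ball c R := by
    refine Subset.antisymm (iUnion_subset fun n ↦ ball_subset_ball (hr_mem n).2.le) fun z hz ↦ ?_
    obtain ⟨n, hn⟩ := (hr_lim.eventually (lt_mem_nhds (mem_ball.1 hz))).exists
    exact mem_iUnion.2 ⟨n, mem_ball.2 hn⟩
  have hlim := tendsto_setIntegral_of_monotone (fun n ↦ measurableSet_ball)
    (fun m n hmn ↦ ball_subset_ball (hr_mono.monotone hmn)) (hunion ▸ hfi)
  rw [hunion] at hlim
  refine tendsto_nhds_unique hlim ?_
  have hdisc : ∀ n, ∫ z in ball c (r n), f z = (π * r n ^ 2) • f c := fun n ↦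
    (hf.diffContOnCl_ball (closedBall_subset_ball (hr_mem n).2)).setIntegral_ball (hr_mem n).1
  simp only [hdisc]
  exact ((hr_lim.pow 2).const_mul π).smul_const (f c)

theorem DifferentiableOn.setAverage_ball {R : ℝ} (hf : DifferentiableOn ℂ f (ball c R))
    (hfi : IntegrableOn f (ball c R)) (hR : 0 < R) :
    ⨍ z in ball c R, f z = f c := by
  rw [setAverage_eq, hf.setIntegral_ball hfi hR, Complex.volume_real_ball c hR.le,
    inv_smul_smul₀ (by positivity)]

end MeanValue

/-- For θ ∈ (0,π/2), among holomorphic pairs (F₁,F₂) ∈ L²(𝔹) with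
cos θ·F₁ + sin θ·z·F₂ = 1, the minimum of ∫(|F₁|²+|F₂|²) is π/cos²θ,
attained at (1/cos θ, 0). -/
theorem stmt_4 (θ : ℝ) (hθ : θ ∈ Set.Ioo 0 (Real.pi / 2)) :
    (∀ F₁ F₂ : ℂ → ℂ, DifferentiableOn ℂ F₁ (Metric.ball 0 1) →
      DifferentiableOn ℂ F₂ (Metric.ball 0 1) →
      MemLp F₁ 2 (volume.restrict (Metric.ball (0:ℂ) 1)) →
      MemLp F₂ 2 (volume.restrict (Metric.ball (0:ℂ) 1)) →
      (∀ z ∈ Metric.ball (0:ℂ) 1,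
        (Real.cos θ : ℂ) * F₁ z + (Real.sin θ : ℂ) * z * F₂ z = 1) →
      Real.pi / Real.cos θ ^ 2 ≤
        ∫ z in Metric.ball (0:ℂ) 1, ‖F₁ z‖ ^ 2 + ‖F₂ z‖ ^ 2) ∧
    (∀ z ∈ Metric.ball (0:ℂ) 1,
      (Real.cos θ : ℂ) * (1 / (Real.cos θ : ℂ)) + (Real.sin θ : ℂ) * z * 0 = 1) ∧
    (∫ z in Metric.ball (0:ℂ) 1,
        ‖(1 / (Real.cos θ : ℂ))‖ ^ 2 + ‖(0:ℂ)‖ ^ 2) =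
      Real.pi / Real.cos θ ^ 2 := by
  have hcos : 0 < cos θ := cos_pos_of_mem_Ioo ⟨by linarith [hθ.1, pi_pos], hθ.2⟩
  have hcos' : (cos θ : ℂ) ≠ 0 := Complex.ofReal_ne_zero.2 hcos.ne'
  have hvol : volume.real (ball (0 : ℂ) 1) = π := by simp [Complex.volume_real_ball]
  have hnorm : ‖1 / (cos θ : ℂ)‖ ^ 2 = 1 / cos θ ^ 2 := by
    rw [norm_div, norm_one, Complex.norm_real, norm_of_nonneg hcos.le, div_pow, one_pow]
  refine ⟨fun F₁ F₂ hF₁ _ hF₁L2 hF₂L2 hsum ↦ ?_, fun _ _ ↦ by field_simp; ring, ?_⟩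
  · have : IsFiniteMeasure (volume.restrict (ball (0 : ℂ) 1)) :=
      isFiniteMeasure_restrict.2 measure_ball_lt_top.ne
    have hF₁0 : F₁ 0 = 1 / cos θ := by
      rw [eq_div_iff hcos', mul_comm]; simpa using hsum 0 (mem_ball_self one_pos)
    have hjensen := sq_norm_average_le_average_sq_norm hF₁L2
    rw [hF₁.setAverage_ball (hF₁L2.integrable one_le_two) one_pos, hF₁0, setAverage_eq,
      hvol, smul_eq_mul, hnorm, le_inv_mul_iff₀ pi_pos, mul_one_div] at hjensen
    have hF₂sq : 0 ≤ ∫ z in ball (0 : ℂ) 1, ‖F₂ z‖ ^ 2 := integral_nonneg fun _ ↦ by positivity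
    rw [integral_add (hF₁L2.integrable_norm_pow two_ne_zero)
      (hF₂L2.integrable_norm_pow two_ne_zero)]
    linarith
  · rw [setIntegral_const, hvol, hnorm, norm_zero, smul_eq_mul]
    ring
end

section
/- Suppose C is a positive C¹ function on (−∞, A], α ≥ 0, D(t) = ∫ₜ^A C(s)ds + αC(A), E(t) = ∫ₜ^A D(s)ds + α²C(A), S(t) = E(t)/D(t). If C'(t) > −C(t)D(t)/E(t) for all t ≤ A, then S'(t) < 0 on (−∞, A), S(A) = α, and S(t) ≥ α for all t ≤ A. -/
open MeasureTheory intervalIntegral Set Filter Topology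

/-- helper: continuity of `t ↦ ∫ t..A f` on `Iic A` for `f` continuous on `Iic A`. -/
lemma stmt8_primCont (A : ℝ) (f : ℝ → ℝ) (hf : ContinuousOn f (Set.Iic A)) :
    ContinuousOn (fun t => ∫ s in t..A, f s) (Set.Iic A) := by
  intro x hx
  have hx' : x ≤ A := hx
  have hsub : Set.uIcc (x - 1) A ⊆ Set.Iic A := by
    rw [Set.uIcc_of_le (by linarith)]
    exact Set.Icc_subset_Iic_self
  have huicc : Set.uIcc (x - 1) A = Set.Icc (x - 1) A := Set.uIcc_of_le (by linarith)
  have hInt : IntegrableOn f (Set.uIcc (x - 1) A) volume := by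
    rw [huicc]
    exact (hf.mono (huicc ▸ hsub)).integrableOn_Icc
  have h1 : ContinuousOn (fun t => ∫ s in t..A, f s) (Set.uIcc (x - 1) A) :=
    intervalIntegral.continuousOn_primitive_interval_left hInt
  have hx1 : x ∈ Set.uIcc (x - 1) A := by
    rw [Set.uIcc_of_le (by linarith)]
    exact ⟨by linarith, hx'⟩
  refine (h1 x hx1).mono_of_mem_nhdsWithin ?_
  rw [mem_nhdsWithin]
  refine ⟨Set.Ioi (x - 1), isOpen_Ioi, by simp, ?_⟩
  intro y hy
  rw [Set.uIcc_of_le (by linarith)]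
  exact ⟨le_of_lt hy.1, hy.2⟩

/-- Lemma 4.2: C positive C¹ on (-∞,A], α ≥ 0,
D(t) = ∫ₜ^A C + αC(A), E(t) = ∫ₜ^A D + α²C(A), S = E/D. If C'(t) > -C(t)D(t)/E(t)
for t ≤ A then S' < 0 on (-∞,A), S(A) = α, and S ≥ α on (-∞,A]. -/
theorem stmt_8 (A α : ℝ) (hα : 0 ≤ α) (C C' : ℝ → ℝ)
    (hCpos : ∀ t ≤ A, 0 < C t)
    (hC : ∀ t ≤ A, HasDerivAt C (C' t) t)
    (hC'cont : ContinuousOn C' (Set.Iic A)) :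
    let D : ℝ → ℝ := fun t => (∫ s in t..A, C s) + α * C A
    let E : ℝ → ℝ := fun t => (∫ s in t..A, D s) + α ^ 2 * C A
    let S : ℝ → ℝ := fun t => E t / D t
    (∀ t ≤ A, C' t > -(C t * D t / E t)) →
      (∀ t ∈ Set.Iio A, deriv S t < 0) ∧ S A = α ∧ (∀ t ≤ A, α ≤ S t) := by
  intro D E S h
  have hCApos : 0 < C A := hCpos A le_rfl
  have hCct : ∀ t ≤ A, ContinuousAt C t := fun t ht => (hC t ht).continuousAt
  have hCcont : ContinuousOn C (Set.Iic A) := fun t ht => (hCct t ht).continuousWithinAt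
  have hCint : ∀ t ≤ A, IntervalIntegrable C volume t A := by
    intro t ht
    refine (hCcont.mono ?_).intervalIntegrable
    rw [Set.uIcc_of_le ht]; exact Set.Icc_subset_Iic_self
  -- continuity of D and E on Iic A
  have hDcont : ContinuousOn D (Set.Iic A) :=
    (stmt8_primCont A C hCcont).add continuousOn_const
  have hDint : ∀ t ≤ A, IntervalIntegrable D volume t A := by
    intro t ht
    refine (hDcont.mono ?_).intervalIntegrable
    rw [Set.uIcc_of_le ht]; exact Set.Icc_subset_Iic_self
  have hEcont : ContinuousOn E (Set.Iic A) :=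
    (stmt8_primCont A D hDcont).add continuousOn_const
  -- derivatives of D and E on Iio A
  have hDd : ∀ t ∈ Set.Iio A, HasDerivAt D (-(C t)) t := by
    intro t ht
    have hmeas : StronglyMeasurableAtFilter C (𝓝 t) volume :=
      ⟨Set.Iio A, isOpen_Iio.mem_nhds ht,
        ((hCcont.mono Set.Iio_subset_Iic_self).aestronglyMeasurable measurableSet_Iio)⟩
    have h1 : HasDerivAt (fun u => ∫ s in u..A, C s) (-(C t)) t :=
      intervalIntegral.integral_hasDerivAt_left (hCint t ht.le) hmeas (hCct t ht.le)
    exact h1.add_const _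
  have hEd : ∀ t ∈ Set.Iio A, HasDerivAt E (-(D t)) t := by
    intro t ht
    have hmeas : StronglyMeasurableAtFilter D (𝓝 t) volume :=
      ⟨Set.Iio A, isOpen_Iio.mem_nhds ht,
        ((hDcont.mono Set.Iio_subset_Iic_self).aestronglyMeasurable measurableSet_Iio)⟩
    have h1 : HasDerivAt (fun u => ∫ s in u..A, D s) (-(D t)) t :=
      intervalIntegral.integral_hasDerivAt_left (hDint t ht.le) hmeas
        ((hDd t ht).continuousAt)
    exact h1.add_const _
  -- positivity
  have hDnonneg : ∀ t ≤ A, 0 ≤ D t := by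
    intro t ht
    have h1 : 0 ≤ ∫ s in t..A, C s :=
      intervalIntegral.integral_nonneg ht (fun u hu => (hCpos u hu.2).le)
    have h2 : 0 ≤ α * C A := mul_nonneg hα hCApos.le
    simpa [D] using add_nonneg h1 h2
  have hDpos : ∀ t ∈ Set.Iio A, 0 < D t := by
    intro t ht
    have h1 : 0 < ∫ s in t..A, C s :=
      intervalIntegral.intervalIntegral_pos_of_pos_on (hCint t ht.le)
        (fun u hu => hCpos u hu.2.le) ht
    have h2 : 0 ≤ α * C A := mul_nonneg hα hCApos.le
    simpa [D] using add_pos_of_pos_of_nonneg h1 h2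
  have hEnonneg : ∀ t ≤ A, 0 ≤ E t := by
    intro t ht
    have h1 : 0 ≤ ∫ s in t..A, D s :=
      intervalIntegral.integral_nonneg ht (fun u hu => hDnonneg u hu.2)
    have h2 : 0 ≤ α ^ 2 * C A := mul_nonneg (sq_nonneg α) hCApos.le
    simpa [E] using add_nonneg h1 h2
  have hEpos : ∀ t ∈ Set.Iio A, 0 < E t := by
    intro t ht
    have h1 : 0 < ∫ s in t..A, D s :=
      intervalIntegral.intervalIntegral_pos_of_pos_on (hDint t ht.le)
        (fun u hu => hDpos u hu.2) ht
    have h2 : 0 ≤ α ^ 2 * C A := mul_nonneg (sq_nonneg α) hCApos.le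
    simpa [E] using add_pos_of_pos_of_nonneg h1 h2
  -- the auxiliary function F = E C - D²
  set F : ℝ → ℝ := fun t => E t * C t - D t ^ 2 with hFdef
  have hFd : ∀ t ∈ Set.Iio A, HasDerivAt F (D t * C t + E t * C' t) t := by
    intro t ht
    have h1 : HasDerivAt (fun u => E u * C u - D u ^ 2)
        ((-(D t)) * C t + E t * C' t - 2 * D t ^ 1 * (-(C t))) t :=
      ((hEd t ht).mul (hC t ht.le)).sub ((hDd t ht).pow 2)
    convert h1 using 1
    ring
  have hFcont : ContinuousOn F (Set.Iic A) :=
    (hEcont.mul hCcont).sub (hDcont.pow 2)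
  have hF'pos : ∀ t ∈ Set.Iio A, 0 < D t * C t + E t * C' t := by
    intro t ht
    have hE : 0 < E t := hEpos t ht
    have hineq := h t ht.le
    have h2 : E t * (-(C t * D t / E t)) < E t * C' t :=
      (mul_lt_mul_iff_right₀ hE).2 hineq
    have h3 : E t * (-(C t * D t / E t)) = -(C t * D t) := by
      field_simp
    rw [h3] at h2
    nlinarith [h2]
  have hFA : F A = 0 := by
    simp only [hFdef, E, D, intervalIntegral.integral_same, zero_add]
    ring
  have hFmono : StrictMonoOn F (Set.Iic A) := by
    refine strictMonoOn_of_deriv_pos (convex_Iic A) hFcont ?_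
    intro x hx
    rw [interior_Iic] at hx
    rw [(hFd x hx).deriv]
    exact hF'pos x hx
  have hFneg : ∀ t ∈ Set.Iio A, F t < 0 := by
    intro t ht
    have := hFmono (Set.mem_Iic.2 ht.le) (Set.mem_Iic.2 le_rfl) ht
    rwa [hFA] at this
  -- derivative of S
  have hSd : ∀ t ∈ Set.Iio A, HasDerivAt S (F t / D t ^ 2) t := by
    intro t ht
    have h1 : HasDerivAt S ((-(D t) * D t - E t * (-(C t))) / D t ^ 2) t :=
      (hEd t ht).div (hDd t ht) (ne_of_gt (hDpos t ht))
    convert h1 using 2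
    simp only [hFdef]
    ring
  have hSderiv : ∀ t ∈ Set.Iio A, deriv S t < 0 := by
    intro t ht
    rw [(hSd t ht).deriv]
    exact div_neg_of_neg_of_pos (hFneg t ht) (pow_pos (hDpos t ht) 2)
  have hSA : S A = α := by
    simp only [S, E, D, intervalIntegral.integral_same, zero_add]
    rcases eq_or_lt_of_le hα with h0 | h0
    · simp [← h0]
    · rw [div_eq_iff (by positivity)]
      ring
  refine ⟨hSderiv, hSA, ?_⟩
  intro t ht
  rcases eq_or_lt_of_le hα with h0 | h0
  · rw [← h0]
    exact div_nonneg (hEnonneg t ht) (hDnonneg t ht)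
  · -- α > 0 : D is positive on all of Iic A, S continuous, strictly decreasing
    have hDpos' : ∀ u ∈ Set.Iic A, 0 < D u := by
      intro u hu
      have h1 : 0 ≤ ∫ s in u..A, C s :=
        intervalIntegral.integral_nonneg hu (fun v hv => (hCpos v hv.2).le)
      have h2 : 0 < α * C A := mul_pos h0 hCApos
      simpa [D] using add_pos_of_nonneg_of_pos h1 h2
    have hScont : ContinuousOn S (Set.Iic A) :=
      hEcont.div hDcont (fun u hu => ne_of_gt (hDpos' u hu))
    have hSanti : StrictAntiOn S (Set.Iic A) := by
      refine strictAntiOn_of_deriv_neg (convex_Iic A) hScont ?_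
      intro x hx
      rw [interior_Iic] at hx
      exact hSderiv x hx
    rcases eq_or_lt_of_le ht with rfl | ht'
    · rw [hSA]
    · have := hSanti (Set.mem_Iic.2 ht) (Set.mem_Iic.2 le_rfl) ht'
      rw [hSA] at this
      exact this.le
end

section
/- For every positive integer k and real B, (1+t)⁻¹ · 2k ∫₀¹ r^{2k−1}/((1+t)⁻¹ + (t/(1+t)) e^B r^{2k})² dr → e^{−B} as t → +∞. -/
/-! With `a = (1 + t)⁻¹` and `b = t e^B / (1 + t)`, the integral is elementary:
`r ^ n / (n a (a + b r ^ n))` is an antiderivative of `r ^ (n - 1) / (a + b r ^ n) ^ 2`, so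
`∫₀¹ r ^ (n - 1) / (a + b r ^ n) ^ 2 = 1 / (n a (a + b))`. The expression in the theorem is
therefore exactly `(a + b)⁻¹`, and `a + b → e^B` as `t → ∞`. -/

open Filter Topology

lemma hasDerivAt_pow_div_mul_add_mul_pow {n : ℕ} (hn : 0 < n) {a b : ℝ} (r : ℝ) (ha : a ≠ 0)
    (hr : a + b * r ^ n ≠ 0) :
    HasDerivAt (fun r : ℝ => r ^ n / (n * a * (a + b * r ^ n)))
      (r ^ (n - 1) / (a + b * r ^ n) ^ 2) r := by
  have hn' : (n : ℝ) ≠ 0 := by exact_mod_cast hn.ne'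
  have hden : HasDerivAt (fun r : ℝ => n * a * (a + b * r ^ n))
      (n * a * (b * (n * r ^ (n - 1)))) r :=
    (((hasDerivAt_pow n r).const_mul b).const_add a).const_mul _
  refine ((hasDerivAt_pow n r).div hden (by positivity)).congr_deriv ?_
  obtain ⟨m, rfl⟩ := Nat.exists_eq_add_one_of_ne_zero hn.ne'
  rw [Nat.add_sub_cancel]
  field_simp
  ring

lemma integral_pow_sub_one_div_add_mul_pow_sq {n : ℕ} (hn : 0 < n) {a b : ℝ} (ha : 0 < a)
    (hab : 0 < a + b) :
    ∫ r in (0 : ℝ)..1, r ^ (n - 1) / (a + b * r ^ n) ^ 2 = 1 / (n * a * (a + b)) := by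
  have hpos : ∀ r ∈ Set.uIcc (0 : ℝ) 1, 0 < a + b * r ^ n := by
    intro r hr
    rw [Set.uIcc_of_le zero_le_one] at hr
    have h0 : 0 ≤ r ^ n := pow_nonneg hr.1 n
    have h1 : r ^ n ≤ 1 := pow_le_one₀ hr.1 hr.2
    rcases le_total 0 b with hb | hb
    · nlinarith [mul_nonneg hb h0]
    · nlinarith [mul_nonneg (neg_nonneg.2 hb) (sub_nonneg.2 h1)]
  have hint : IntervalIntegrable (fun r : ℝ => r ^ (n - 1) / (a + b * r ^ n) ^ 2)
      MeasureTheory.volume 0 1 :=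
    (ContinuousOn.div (by fun_prop) (by fun_prop)
      fun r hr => pow_ne_zero 2 (hpos r hr).ne').intervalIntegrable
  rw [intervalIntegral.integral_eq_sub_of_hasDerivAt
    (fun r hr => hasDerivAt_pow_div_mul_add_mul_pow hn r ha.ne' (hpos r hr).ne') hint]
  simp [hn.ne']

lemma tendsto_inv_one_add_add_div_one_add_mul_atTop (c : ℝ) :
    Tendsto (fun t : ℝ => (1 + t)⁻¹ + t / (1 + t) * c) atTop (𝓝 c) := by
  have hinv : Tendsto (fun t : ℝ => (1 + t)⁻¹) atTop (𝓝 0) :=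
    tendsto_inv_atTop_zero.comp (tendsto_atTop_add_const_left _ 1 tendsto_id)
  have hrewrite : ∀ᶠ t : ℝ in atTop, (1 + t)⁻¹ + t / (1 + t) * c = c + (1 - c) * (1 + t)⁻¹ := by
    filter_upwards [eventually_gt_atTop (0 : ℝ)] with t ht
    field_simp
    ring
  rw [tendsto_congr' hrewrite]
  simpa using (hinv.const_mul (1 - c)).const_add c

/-- For every positive integer k and real B,
(1+t)⁻¹·2k ∫₀¹ r^{2k-1}/((1+t)⁻¹ + (t/(1+t))e^B r^{2k})² dr → e^{-B} as t → +∞. -/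
theorem stmt_12 (k : ℕ) (hk : 1 ≤ k) (B : ℝ) :
    Filter.Tendsto (fun t : ℝ =>
        (1 + t)⁻¹ * (2 * k) *
          ∫ r in (0:ℝ)..1,
            r ^ (2 * k - 1) /
              ((1 + t)⁻¹ + (t / (1 + t)) * Real.exp B * r ^ (2 * k)) ^ 2)
      Filter.atTop (nhds (Real.exp (-B))) := by
  have hlim := (tendsto_inv_one_add_add_div_one_add_mul_atTop (Real.exp B)).inv₀
    (Real.exp_ne_zero B)
  rw [← Real.exp_neg] at hlim
  refine hlim.congr' ?_
  filter_upwards [eventually_gt_atTop (0 : ℝ)] with t ht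
  have ha : 0 < (1 + t)⁻¹ := by positivity
  have hab : 0 < (1 + t)⁻¹ + t / (1 + t) * Real.exp B := by positivity
  rw [integral_pow_sub_one_div_add_mul_pow_sq (by omega) ha hab]
  have hk' : (k : ℝ) ≠ 0 := by exact_mod_cast (by omega : k ≠ 0)
  push_cast
  field_simp
end
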